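/- Let $\rho \in [0,1)$ and $L \in \mathbb{N}$. For any $k_1, k_2 \in \mathbb{N}$ with $k_1 \geq 1$, $k_2 \geq 1$, and $\min(k_1, k_2) \leq L$, and for any $\ell_1 \in \{1,\ldots,2^{k_1}\}$ and $\ell_2 \in \{1,\ldots,2^{k_2}\}$, one has $\int_{(\ell_1-1)2^{-k_1}}^{\ell_1 2^{-k_1}} \int_{(\ell_2-1)2^{-k_2}}^{\ell_2 2^{-k_2}} f_{\rho,L}(x,y)\,dy\,dx = 2^{-k_1-k_2}$. That is, the probability assigned by $f_{\rho,L}$ to every dyadic rectangle whose resolution in at least one coordinate does not exceed $L$ equals the product of the (uniform) marginal probabilities of its sides. -/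

import Mathlib

open Real intervalIntegral

/-- The sinusoidal dependence density on the unit square. -/
noncomputable def sinDensity (ρ : ℝ) (L : ℕ) (x y : ℝ) : ℝ :=
  1 + ρ * Real.sin (2 ^ (L + 1) * Real.pi * x) * Real.sin (2 ^ (L + 1) * Real.pi * y)

/-!
The integral of the density over a rectangle is its area plus `ρ` times the product of the
integrals of the sine factor over the two sides. A dyadic interval of length `2⁻ᵏ` with
`k ≤ L` consists of `2^(L-k)` full periods of `x ↦ sin (2^(L+1) π x)`, so the sine integral
over that side vanishes.
-/

theorem integral_sin_const_mul_eq_zero_of_eq_add_int_mul_two_pi {c a b : ℝ} (n : ℤ)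
    (h : c * b = c * a + n * (2 * π)) :
    ∫ x in a..b, sin (c * x) = 0 := by
  rcases eq_or_ne c 0 with rfl | hc
  · simp
  have hsmul := smul_integral_comp_mul_left (f := sin) (a := a) (b := b) c
  rw [integral_sin, h, cos_add_int_mul_two_pi, sub_self] at hsmul
  exact (smul_eq_zero.mp hsmul).resolve_left hc

theorem integral_sin_two_pow_mul_pi_dyadic_eq_zero {L k : ℕ} (hk : k ≤ L) (t : ℝ) :
    ∫ x in (t - 1) * 2 ^ (-(k : ℤ))..t * 2 ^ (-(k : ℤ)), sin (2 ^ (L + 1) * π * x) = 0 := by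
  refine integral_sin_const_mul_eq_zero_of_eq_add_int_mul_two_pi (2 ^ (L - k) : ℕ) ?_
  have hpow : (2 : ℝ) ^ (L + 1) * 2 ^ (-(k : ℤ)) = 2 ^ (L - k) * 2 := by
    rw [← zpow_natCast, ← zpow_add₀ two_ne_zero, ← pow_succ, ← zpow_natCast]
    congr 1
    omega
  push_cast
  linear_combination π * hpow

theorem integral_integral_one_add_mul_mul {f g : ℝ → ℝ} (ρ : ℝ) {a₁ b₁ a₂ b₂ : ℝ}
    (hf : IntervalIntegrable f MeasureTheory.volume a₁ b₁) (hg : IntervalIntegrable g MeasureTheory.volume a₂ b₂) :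
    ∫ x in a₁..b₁, ∫ y in a₂..b₂, 1 + ρ * f x * g y
      = (b₁ - a₁) * (b₂ - a₂) + ρ * (∫ x in a₁..b₁, f x) * ∫ y in a₂..b₂, g y := by
  have hinner : ∀ x, ∫ y in a₂..b₂, 1 + ρ * f x * g y
      = (b₂ - a₂) + (ρ * ∫ y in a₂..b₂, g y) * f x := by
    intro x
    rw [integral_add intervalIntegrable_const (hg.const_mul _), integral_const_mul,
      integral_const, smul_eq_mul, mul_one]
    ring
  simp_rw [hinner]
  rw [integral_add intervalIntegrable_const (hf.const_mul _), integral_const_mul,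
    integral_const, smul_eq_mul]
  ring

theorem sinDensity_dyadic_rectangle_product_general (ρ : ℝ) (L : ℕ)
    (k₁ k₂ : ℕ) (hmin : min k₁ k₂ ≤ L)
    (ℓ₁ ℓ₂ : ℕ) :
    (∫ x in (((ℓ₁ : ℝ) - 1) * 2 ^ (-(k₁ : ℤ)))..((ℓ₁ : ℝ) * 2 ^ (-(k₁ : ℤ))),
      ∫ y in (((ℓ₂ : ℝ) - 1) * 2 ^ (-(k₂ : ℤ)))..((ℓ₂ : ℝ) * 2 ^ (-(k₂ : ℤ))),
        sinDensity ρ L x y) = 2 ^ (-(k₁ : ℤ) - (k₂ : ℤ)) := by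
  have hsin : Continuous fun x ↦ sin (2 ^ (L + 1) * π * x) := by fun_prop
  simp only [sinDensity]
  rw [integral_integral_one_add_mul_mul ρ (hsin.intervalIntegrable _ _)
    (hsin.intervalIntegrable _ _)]
  rw [sub_eq_add_neg (-(k₁ : ℤ)), zpow_add₀ two_ne_zero]
  rcases min_le_iff.mp hmin with h | h
  all_goals rw [integral_sin_two_pow_mul_pi_dyadic_eq_zero h]; ring

theorem sinDensity_dyadic_rectangle_product (ρ : ℝ) (hρ0 : 0 ≤ ρ) (hρ1 : ρ < 1) (L : ℕ)
    (k₁ k₂ : ℕ) (hk₁ : 1 ≤ k₁) (hk₂ : 1 ≤ k₂) (hmin : min k₁ k₂ ≤ L)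
    (ℓ₁ ℓ₂ : ℕ) (hℓ₁1 : 1 ≤ ℓ₁) (hℓ₁2 : ℓ₁ ≤ 2 ^ k₁) (hℓ₂1 : 1 ≤ ℓ₂) (hℓ₂2 : ℓ₂ ≤ 2 ^ k₂) :
    (∫ x in (((ℓ₁ : ℝ) - 1) * 2 ^ (-(k₁ : ℤ)))..((ℓ₁ : ℝ) * 2 ^ (-(k₁ : ℤ))),
      ∫ y in (((ℓ₂ : ℝ) - 1) * 2 ^ (-(k₂ : ℤ)))..((ℓ₂ : ℝ) * 2 ^ (-(k₂ : ℤ))),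
        sinDensity ρ L x y) = 2 ^ (-(k₁ : ℤ) - (k₂ : ℤ)) :=
  sinDensity_dyadic_rectangle_product_general ρ L k₁ k₂ hmin ℓ₁ ℓ₂
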